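/- Consider three nodes with i.i.d. class labels over c ≥ 2 classes, where class k has probability p and every other class has probability (1-p)/(c-1). Form one cluster of size 3 labeled by majority vote with uniform tie-breaking among tied top classes, and let q(p) denote the probability that the cluster is labeled k. Then for c ≥ 3 and 0 < p < 1/c, q(p) < p. -/

import Mathlib

open Finset

def cnt3 {c : ℕ} (a b d j : Fin c) : ℕ :=
  (if a = j then 1 else 0) + (if b = j then 1 else 0) + (if d = j then 1 else 0)

lemma card_eq_cnt3 {c : ℕ} (a b d j : Fin c) :
    (Finset.univ.filter (fun i : Fin 3 => ![a,b,d] i = j)).card = cnt3 a b d j := by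
  rw [Finset.card_filter, Fin.sum_univ_three]
  simp [cnt3]
  rfl

noncomputable def Wt {c : ℕ} (N : Fin c → ℕ) (k : Fin c) : ℝ :=
  if N k = Finset.univ.sup N then
    (1 : ℝ) / ((Finset.univ.filter (fun j => N j = Finset.univ.sup N)).card : ℝ)
  else 0

lemma sup_eq_of {c : ℕ} (N : Fin c → ℕ) (k : Fin c) (m : ℕ) (hk : N k = m)
    (hle : ∀ j, N j ≤ m) : Finset.univ.sup N = m :=
  le_antisymm (Finset.sup_le fun j _ => hle j) (hk ▸ Finset.le_sup (Finset.mem_univ k))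

lemma Wt_eval {c : ℕ} (N : Fin c → ℕ) (k : Fin c) (m : ℕ) (s : Finset (Fin c))
    (hk : N k = m) (hle : ∀ j, N j ≤ m) (hs : ∀ j, N j = m ↔ j ∈ s) :
    Wt N k = 1 / (s.card : ℝ) := by
  have h := sup_eq_of N k m hk hle
  have hfilter : Finset.univ.filter (fun j => N j = m) = s := by
    ext j; simp [hs j]
  rw [Wt, h, if_pos hk, hfilter]

lemma Wt_zero {c : ℕ} (N : Fin c → ℕ) (k : Fin c) (h : N k ≠ Finset.univ.sup N) :
    Wt N k = 0 := if_neg h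

lemma cnt3_swap1 {c : ℕ} (a b d : Fin c) : cnt3 a b d = cnt3 b a d := by
  funext j; unfold cnt3; ring

lemma cnt3_swap2 {c : ℕ} (a b d : Fin c) : cnt3 a b d = cnt3 a d b := by
  funext j; unfold cnt3; ring

-- pattern lemmas
lemma Wt_kkk {c : ℕ} (k : Fin c) : Wt (cnt3 k k k) k = 1 := by
  rw [Wt_eval (cnt3 k k k) k 3 {k} (by simp [cnt3])
    (fun j => by unfold cnt3; split_ifs <;> omega)
    (fun j => by
      unfold cnt3
      rcases eq_or_ne k j with rfl | h
      · simp
      · simp [if_neg h, Ne.symm h])]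
  simp

lemma Wt_kkd {c : ℕ} (k d : Fin c) (hd : d ≠ k) : Wt (cnt3 k k d) k = 1 := by
  rw [Wt_eval (cnt3 k k d) k 2 {k} (by simp [cnt3, hd])
    (fun j => by
      unfold cnt3
      rcases eq_or_ne k j with rfl | h
      · simp [hd]
      · rcases eq_or_ne d j with rfl | h2
        · simp [if_neg h]
        · simp [if_neg h, if_neg h2])
    (fun j => by
      unfold cnt3
      rcases eq_or_ne k j with rfl | h
      · simp [hd]
      · rcases eq_or_ne d j with rfl | h2
        · simp [if_neg h, Ne.symm h]
        · simp [if_neg h, if_neg h2, Ne.symm h])]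
  simp

lemma Wt_kbd {c : ℕ} (k b d : Fin c) (hb : b ≠ k) (hd : d ≠ k) (hbd : b ≠ d) :
    Wt (cnt3 k b d) k = 1 / 3 := by
  have hcard : ({k, b, d} : Finset (Fin c)).card = 3 := by
    rw [Finset.card_insert_of_notMem (by simp [Ne.symm hb, Ne.symm hd]),
      Finset.card_insert_of_notMem (by simp [hbd]), Finset.card_singleton]
  rw [Wt_eval (cnt3 k b d) k 1 {k, b, d} (by simp [cnt3, hb, hd])
    (fun j => by
      unfold cnt3
      rcases eq_or_ne k j with rfl | h1
      · simp [hb, hd]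
      · rcases eq_or_ne b j with rfl | h2
        · simp [if_neg h1, Ne.symm hbd]
        · simp [if_neg h1, if_neg h2]; split_ifs <;> omega)
    (fun j => by
      unfold cnt3
      rcases eq_or_ne k j with rfl | h1
      · simp [hb, hd]
      · rcases eq_or_ne b j with rfl | h2
        · simp [if_neg h1, Ne.symm hbd]
        · rcases eq_or_ne d j with rfl | h3
          · simp [if_neg h1, if_neg h2]
          · simp [if_neg h1, if_neg h2, if_neg h3, Ne.symm h1, Ne.symm h2, Ne.symm h3])]
  rw [hcard]
  norm_num

lemma Wt_kbb {c : ℕ} (k b : Fin c) (hb : b ≠ k) : Wt (cnt3 k b b) k = 0 := by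
  apply Wt_zero
  have h1 : cnt3 k b b k = 1 := by simp [cnt3, hb]
  have h2 : (2 : ℕ) ≤ Finset.univ.sup (cnt3 k b b) := by
    have : cnt3 k b b b = 2 := by simp [cnt3, Ne.symm hb]
    calc (2:ℕ) = cnt3 k b b b := this.symm
    _ ≤ _ := Finset.le_sup (Finset.mem_univ b)
  omega

lemma Wt_none {c : ℕ} (k a b d : Fin c) (ha : a ≠ k) (hb : b ≠ k) (hd : d ≠ k) :
    Wt (cnt3 a b d) k = 0 := by
  apply Wt_zero
  have h1 : cnt3 a b d k = 0 := by simp [cnt3, ha, hb, hd]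
  have h2 : (1 : ℕ) ≤ Finset.univ.sup (cnt3 a b d) := by
    have : (1:ℕ) ≤ cnt3 a b d a := by unfold cnt3; split_ifs <;> simp_all
    exact this.trans (Finset.le_sup (Finset.mem_univ a))
  omega

lemma sum_eval (c : ℕ) (hc : 3 ≤ c) (k : Fin c) (p r : ℝ) :
    (∑ a : Fin c, ∑ b : Fin c, ∑ d : Fin c,
      (if a = k then p else r) * (if b = k then p else r) * (if d = k then p else r) *
        Wt (cnt3 a b d) k)
    = p^3 + 3*((c:ℝ)-1)*p^2*r + ((c:ℝ)-1)*((c:ℝ)-2)*p*r^2 := by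
  have cast1 : ((c - 1 : ℕ) : ℝ) = (c:ℝ) - 1 := by
    rw [Nat.cast_sub (by omega)]; norm_num
  have cast2 : ((c - 2 : ℕ) : ℝ) = (c:ℝ) - 2 := by
    rw [Nat.cast_sub (by omega)]; norm_num
  have cardA : ((Finset.univ : Finset (Fin c)).erase k).card = c - 1 := by
    rw [Finset.card_erase_of_mem (Finset.mem_univ k), Finset.card_univ, Fintype.card_fin]
  have cardB : ∀ b, b ∈ (Finset.univ : Finset (Fin c)).erase k →
      (((Finset.univ : Finset (Fin c)).erase k).erase b).card = c - 2 := by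
    intro b hb
    rw [Finset.card_erase_of_mem hb, cardA]
    omega
  -- innermost sums
  have hd_kk : (∑ d : Fin c, (if d = k then p else r) * Wt (cnt3 k k d) k)
      = p + ((c:ℝ)-1)*r := by
    rw [← Finset.add_sum_erase _ _ (Finset.mem_univ k), if_pos rfl, Wt_kkk]
    have h : ∑ d ∈ (Finset.univ : Finset (Fin c)).erase k,
        (if d = k then p else r) * Wt (cnt3 k k d) k
        = ∑ _d ∈ (Finset.univ : Finset (Fin c)).erase k, r := by
      refine Finset.sum_congr rfl fun d hd => ?_
      rw [Finset.mem_erase] at hd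
      rw [if_neg hd.1, Wt_kkd k d hd.1, mul_one]
    rw [h, Finset.sum_const, nsmul_eq_mul, cardA, cast1]
    ring
  have hd_kb : ∀ b : Fin c, b ≠ k →
      (∑ d : Fin c, (if d = k then p else r) * Wt (cnt3 k b d) k)
      = p + ((c:ℝ)-2)*(r/3) := by
    intro b hb
    have hbmem : b ∈ (Finset.univ : Finset (Fin c)).erase k :=
      Finset.mem_erase.mpr ⟨hb, Finset.mem_univ b⟩
    rw [← Finset.add_sum_erase _ _ (Finset.mem_univ k), if_pos rfl]
    have h1 : Wt (cnt3 k b k) k = 1 := by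
      rw [cnt3_swap2]; exact Wt_kkd k b hb
    rw [h1, mul_one, ← Finset.add_sum_erase _ _ hbmem, if_neg hb, Wt_kbb k b hb,
      mul_zero, zero_add]
    have h : ∑ d ∈ ((Finset.univ : Finset (Fin c)).erase k).erase b,
        (if d = k then p else r) * Wt (cnt3 k b d) k
        = ∑ _d ∈ ((Finset.univ : Finset (Fin c)).erase k).erase b, r * (1/3) := by
      refine Finset.sum_congr rfl fun d hd => ?_
      rw [Finset.mem_erase, Finset.mem_erase] at hd
      rw [if_neg hd.2.1, Wt_kbd k b d hb hd.2.1 (Ne.symm hd.1)]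
    rw [h, Finset.sum_const, nsmul_eq_mul, cardB b hbmem, cast2]
    ring
  have hd_bk : ∀ a : Fin c, a ≠ k →
      (∑ d : Fin c, (if d = k then p else r) * Wt (cnt3 a k d) k)
      = p + ((c:ℝ)-2)*(r/3) := by
    intro a ha
    have hamem : a ∈ (Finset.univ : Finset (Fin c)).erase k :=
      Finset.mem_erase.mpr ⟨ha, Finset.mem_univ a⟩
    rw [← Finset.add_sum_erase _ _ (Finset.mem_univ k), if_pos rfl]
    have h1 : Wt (cnt3 a k k) k = 1 := by
      rw [cnt3_swap1, cnt3_swap2]; exact Wt_kkd k a ha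
    have h0 : Wt (cnt3 a k a) k = 0 := by
      rw [cnt3_swap1]; exact Wt_kbb k a ha
    rw [h1, mul_one, ← Finset.add_sum_erase _ _ hamem, if_neg ha, h0, mul_zero, zero_add]
    have h : ∑ d ∈ ((Finset.univ : Finset (Fin c)).erase k).erase a,
        (if d = k then p else r) * Wt (cnt3 a k d) k
        = ∑ _d ∈ ((Finset.univ : Finset (Fin c)).erase k).erase a, r * (1/3) := by
      refine Finset.sum_congr rfl fun d hd => ?_
      rw [Finset.mem_erase, Finset.mem_erase] at hd
      have hw : Wt (cnt3 a k d) k = 1/3 := by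
        rw [cnt3_swap1]; exact Wt_kbd k a d ha hd.2.1 (Ne.symm hd.1)
      rw [if_neg hd.2.1, hw]
    rw [h, Finset.sum_const, nsmul_eq_mul, cardB a hamem, cast2]
    ring
  have hd_bb : ∀ a : Fin c, a ≠ k →
      (∑ d : Fin c, (if d = k then p else r) * Wt (cnt3 a a d) k) = 0 := by
    intro a ha
    apply Finset.sum_eq_zero
    intro d _
    rcases eq_or_ne d k with rfl | hd
    · have h0 : Wt (cnt3 a a d) d = 0 := by
        rw [cnt3_swap2, cnt3_swap1]; exact Wt_kbb d a ha
      rw [h0, mul_zero]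
    · rw [Wt_none k a a d ha ha hd, mul_zero]
  have hd_ab : ∀ a b : Fin c, a ≠ k → b ≠ k → a ≠ b →
      (∑ d : Fin c, (if d = k then p else r) * Wt (cnt3 a b d) k) = p/3 := by
    intro a b ha hb hab
    rw [← Finset.add_sum_erase _ _ (Finset.mem_univ k), if_pos rfl]
    have h1 : Wt (cnt3 a b k) k = 1/3 := by
      rw [cnt3_swap2, cnt3_swap1]; exact Wt_kbd k a b ha hb hab
    have h : ∑ d ∈ (Finset.univ : Finset (Fin c)).erase k,
        (if d = k then p else r) * Wt (cnt3 a b d) k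
        = ∑ _d ∈ (Finset.univ : Finset (Fin c)).erase k, (0:ℝ) := by
      refine Finset.sum_congr rfl fun d hd => ?_
      rw [Finset.mem_erase] at hd
      rw [Wt_none k a b d ha hb hd.1, mul_zero]
    rw [h1, h, Finset.sum_const, smul_zero]
    ring
  -- middle sums
  have hb_k : (∑ b : Fin c, (if b = k then p else r) *
      ∑ d : Fin c, (if d = k then p else r) * Wt (cnt3 k b d) k)
      = p*(p + ((c:ℝ)-1)*r) + ((c:ℝ)-1)*(r*(p + ((c:ℝ)-2)*(r/3))) := by
    rw [← Finset.add_sum_erase _ _ (Finset.mem_univ k), if_pos rfl, hd_kk]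
    have h : ∑ b ∈ (Finset.univ : Finset (Fin c)).erase k,
        ((if b = k then p else r) * ∑ d : Fin c, (if d = k then p else r) * Wt (cnt3 k b d) k)
        = ∑ _b ∈ (Finset.univ : Finset (Fin c)).erase k, r * (p + ((c:ℝ)-2)*(r/3)) := by
      refine Finset.sum_congr rfl fun b hb => ?_
      rw [Finset.mem_erase] at hb
      rw [if_neg hb.1, hd_kb b hb.1]
    rw [h, Finset.sum_const, nsmul_eq_mul, cardA, cast1]
  have hb_a : ∀ a : Fin c, a ≠ k →
      (∑ b : Fin c, (if b = k then p else r) *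
        ∑ d : Fin c, (if d = k then p else r) * Wt (cnt3 a b d) k)
      = p*(p + ((c:ℝ)-2)*(r/3)) + ((c:ℝ)-2)*(r*(p/3)) := by
    intro a ha
    have hamem : a ∈ (Finset.univ : Finset (Fin c)).erase k :=
      Finset.mem_erase.mpr ⟨ha, Finset.mem_univ a⟩
    rw [← Finset.add_sum_erase _ _ (Finset.mem_univ k), if_pos rfl, hd_bk a ha,
      ← Finset.add_sum_erase _ _ hamem, if_neg ha, hd_bb a ha, mul_zero, zero_add]
    have h : ∑ b ∈ ((Finset.univ : Finset (Fin c)).erase k).erase a,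
        ((if b = k then p else r) * ∑ d : Fin c, (if d = k then p else r) * Wt (cnt3 a b d) k)
        = ∑ _b ∈ ((Finset.univ : Finset (Fin c)).erase k).erase a, r * (p/3) := by
      refine Finset.sum_congr rfl fun b hb => ?_
      rw [Finset.mem_erase, Finset.mem_erase] at hb
      rw [if_neg hb.2.1, hd_ab a b ha hb.2.1 (Ne.symm hb.1)]
    rw [h, Finset.sum_const, nsmul_eq_mul, cardB a hamem, cast2]
  -- outer sum
  have step : (∑ a : Fin c, ∑ b : Fin c, ∑ d : Fin c,
      (if a = k then p else r) * (if b = k then p else r) * (if d = k then p else r) *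
        Wt (cnt3 a b d) k)
      = ∑ a : Fin c, (if a = k then p else r) *
          ∑ b : Fin c, (if b = k then p else r) *
            ∑ d : Fin c, (if d = k then p else r) * Wt (cnt3 a b d) k := by
    refine Finset.sum_congr rfl fun a _ => ?_
    rw [Finset.mul_sum]
    refine Finset.sum_congr rfl fun b _ => ?_
    rw [Finset.mul_sum, Finset.mul_sum]
    refine Finset.sum_congr rfl fun d _ => ?_
    ring
  rw [step, ← Finset.add_sum_erase _ _ (Finset.mem_univ k), if_pos rfl, hb_k]
  have h : ∑ a ∈ (Finset.univ : Finset (Fin c)).erase k,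
      ((if a = k then p else r) * ∑ b : Fin c, (if b = k then p else r) *
        ∑ d : Fin c, (if d = k then p else r) * Wt (cnt3 a b d) k)
      = ∑ _a ∈ (Finset.univ : Finset (Fin c)).erase k,
          r * (p*(p + ((c:ℝ)-2)*(r/3)) + ((c:ℝ)-2)*(r*(p/3))) := by
    refine Finset.sum_congr rfl fun a ha => ?_
    rw [Finset.mem_erase] at ha
    rw [if_neg ha.1, hb_a a ha.1]
  rw [h, Finset.sum_const, nsmul_eq_mul, cardA, cast1]
  ring

def tripleEquiv (c : ℕ) : (Fin c × Fin c × Fin c) ≃ (Fin 3 → Fin c) where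
  toFun x := ![x.1, x.2.1, x.2.2]
  invFun f := (f 0, f 1, f 2)
  left_inv := by rintro ⟨a, b, d⟩; simp
  right_inv f := by
    funext i
    fin_cases i <;> simp

lemma term_eq {c : ℕ} (k a b d : Fin c) (p r : ℝ) :
    (∏ i, (if (![a,b,d]) i = k then p else r)) *
      (if (Finset.univ.filter (fun i : Fin 3 => ![a,b,d] i = k)).card
          = Finset.univ.sup (fun j : Fin c =>
              (Finset.univ.filter (fun i : Fin 3 => ![a,b,d] i = j)).card)
       then (1 : ℝ) /
         ((Finset.univ.filter (fun j : Fin c =>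
            (Finset.univ.filter (fun i : Fin 3 => ![a,b,d] i = j)).card
              = Finset.univ.sup (fun j' : Fin c =>
                  (Finset.univ.filter (fun i : Fin 3 => ![a,b,d] i = j')).card))).card)
       else 0)
    = (if a = k then p else r) * (if b = k then p else r) * (if d = k then p else r) *
        Wt (cnt3 a b d) k := by
  rw [Fin.prod_univ_three]
  simp only [Matrix.cons_val_zero, Matrix.cons_val_one, Matrix.head_cons, Matrix.cons_val_two,
    Matrix.tail_cons, card_eq_cnt3, Wt]
  rfl

/-- Three nodes draw classes i.i.d. over `c ≥ 3` classes, where class `k` has probability `p`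
and each other class has probability `(1-p)/(c-1)`.  A cluster of the three nodes is labeled by
majority vote with uniform tie-breaking among tied top classes.  For `0 < p < 1/c`, the
probability `q(p)` that the cluster is labeled `k` satisfies `q(p) < p`. -/
theorem stmt_14 (c : ℕ) (hc : 3 ≤ c) (k : Fin c) (p : ℝ)
    (hp : 0 < p) (hpc : p < 1 / (c : ℝ)) :
    (∑ ℓ : Fin 3 → Fin c,
      (∏ i, (if ℓ i = k then p else (1 - p) / ((c : ℝ) - 1))) *
      (if (Finset.univ.filter (fun i : Fin 3 => ℓ i = k)).card
          = Finset.univ.sup (fun j : Fin c => (Finset.univ.filter (fun i : Fin 3 => ℓ i = j)).card)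
       then (1 : ℝ) /
         ((Finset.univ.filter (fun j : Fin c =>
            (Finset.univ.filter (fun i : Fin 3 => ℓ i = j)).card
              = Finset.univ.sup (fun j' : Fin c =>
                  (Finset.univ.filter (fun i : Fin 3 => ℓ i = j')).card))).card)
       else 0))
    < p := by
  rw [← Equiv.sum_comp (tripleEquiv c)]
  simp only [tripleEquiv, Equiv.coe_fn_mk, Fintype.sum_prod_type]
  refine lt_of_eq_of_lt (Finset.sum_congr rfl fun a _ => Finset.sum_congr rfl fun b _ =>
    Finset.sum_congr rfl fun d _ => term_eq k a b d p ((1 - p) / ((c:ℝ) - 1))) ?_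
  rw [sum_eval c hc k p ((1 - p) / ((c:ℝ) - 1))]
  have hx : (3:ℝ) ≤ (c:ℝ) := by exact_mod_cast hc
  have hx0 : (0:ℝ) < (c:ℝ) := by linarith
  have hx1 : (0:ℝ) < (c:ℝ) - 1 := by linarith
  have hpx : p * (c:ℝ) < 1 := by
    rw [← lt_div_iff₀ hx0]; exact hpc
  have hp1 : p < 1 := by nlinarith
  have key2 : p - (p^3 + 3*((c:ℝ)-1)*p^2*((1-p)/((c:ℝ)-1)) +
      ((c:ℝ)-1)*((c:ℝ)-2)*p*((1-p)/((c:ℝ)-1))^2)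
      = p*(1-p)*(1-p*(c:ℝ))/((c:ℝ)-1) := by
    field_simp
    ring
  have hpos : (0:ℝ) < p*(1-p)*(1-p*(c:ℝ))/((c:ℝ)-1) := by
    apply div_pos _ hx1
    apply mul_pos (mul_pos hp (by linarith)) (by linarith)
  linarith [key2, hpos]
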